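/- Let T be a weighted tree rooted at v0 with edge-weight function W, and let f(z) = exp(a·z + b) for real constants a, b. For a vector x indexed by vertices, define s_i = Σ_{j in T_i} f(dist(i,j))·x_j where T_i is the subtree rooted at i and dist is the weighted path distance. Then for any non-root vertex i with parent p(i) and with w_i = Σ_{j in T} f(dist(i,j))·x_j, the identity w_i = exp(a·W(i,p(i)))·w_{p(i)} + (1 − exp(2a·W(i,p(i))))·s_i holds. -/

import Mathlib

/-!
Split every sum at the subtree `Tᵢ`. Inside `Tᵢ` the path from `p(i)` passes through `i`, so the
kernel seen from `p(i)` is the kernel seen from `i` times `exp (a W)`; outside `Tᵢ` the roles of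
`i` and `p(i)` swap. Since `f` is exponential, these rescalings by `c = exp (a W)` are all that is
needed, and `1 - c ^ 2` corrects for `Tᵢ` having been rescaled twice.
-/

open Finset

theorem Finset.sum_eq_mul_sum_add_one_sub_sq_mul_sum {ι R : Type*} [Fintype ι] [CommRing R]
    (s : Finset ι) (f g : ι → R) (c : R)
    (hin : ∀ j ∈ s, g j = c * f j) (hout : ∀ j ∉ s, f j = c * g j) :
    ∑ j, f j = c * ∑ j, g j + (1 - c ^ 2) * ∑ j ∈ s, f j := by
  classical
  have hg_in : ∑ j ∈ s, g j = c * ∑ j ∈ s, f j := by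
    rw [mul_sum]; exact sum_congr rfl hin
  have hf_out : ∑ j ∈ sᶜ, f j = c * ∑ j ∈ sᶜ, g j := by
    rw [mul_sum]; exact sum_congr rfl fun j hj => hout j (mem_compl.mp hj)
  rw [← sum_add_sum_compl s f, ← sum_add_sum_compl s g, hg_in, hf_out]
  ring

theorem stmt0_general {V : Type*} [Fintype V]
    (dist : V → V → ℝ) (x : V → ℝ) (a b : ℝ)
    (i pi : V) (Ti : Finset V) (W : ℝ)
    (h1 : ∀ j ∈ Ti, dist pi j = W + dist i j)
    (h2 : ∀ j ∉ Ti, dist i j = W + dist pi j) :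
    (∑ j, Real.exp (a * dist i j + b) * x j) =
      Real.exp (a * W) * (∑ j, Real.exp (a * dist pi j + b) * x j) +
        (1 - Real.exp (2 * a * W)) * ∑ j ∈ Ti, Real.exp (a * dist i j + b) * x j := by
  have kernel_shift (d : ℝ) :
      Real.exp (a * (W + d) + b) = Real.exp (a * W) * Real.exp (a * d + b) := by
    rw [← Real.exp_add]; ring_nf
  have exp_two_mul : Real.exp (2 * a * W) = Real.exp (a * W) ^ 2 := by
    rw [← Real.exp_nat_mul]; ring_nf
  rw [exp_two_mul]
  refine sum_eq_mul_sum_add_one_sub_sq_mul_sum Ti _ _ _ (fun j hj => ?_) (fun j hj => ?_)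
  · rw [h1 j hj, kernel_shift, mul_assoc]
  · rw [h2 j hj, kernel_shift, mul_assoc]

/-- In a weighted tree rooted at `v0`, for a non-root vertex `i` with
parent `pi`, edge weight `W = W(i, p(i))`, subtree `Ti` (vertices of the subtree rooted
at `i`), and `f z = exp (a*z + b)`, we have
`w_i = exp(a*W) * w_{p(i)} + (1 - exp(2*a*W)) * s_i`. The tree structure is encoded by
the two distance identities: for `j` in the subtree of `i`, `dist (p i) j = W + dist i j`,
and for `j` outside it, `dist i j = W + dist (p i) j`. -/
theorem stmt0 {V : Type*} [Fintype V] [DecidableEq V]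
    (dist : V → V → ℝ) (x : V → ℝ) (a b : ℝ)
    (i pi : V) (Ti : Finset V) (W : ℝ)
    (h1 : ∀ j ∈ Ti, dist pi j = W + dist i j)
    (h2 : ∀ j ∉ Ti, dist i j = W + dist pi j) :
    (∑ j, Real.exp (a * dist i j + b) * x j) =
      Real.exp (a * W) * (∑ j, Real.exp (a * dist pi j + b) * x j) +
        (1 - Real.exp (2 * a * W)) * ∑ j ∈ Ti, Real.exp (a * dist i j + b) * x j :=
  stmt0_general dist x a b i pi Ti W h1 h2
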